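/- No three points of P^k are collinear, for all k ≥ 0. -/
import Mathlib

/-- `f 1 = 0` and `f i = 2 ^ (i*(i-1)/2 - 1)` for `i ≥ 2`. -/
def f (i : ℕ) : ℤ := if i ≤ 1 then 0 else 2 ^ (i * (i - 1) / 2 - 1)

/-- `g 1 = 0` and `g i = f i - f (i-1)` for `i ≥ 2`. -/
def g (i : ℕ) : ℤ := if i ≤ 1 then 0 else f i - f (i - 1)

/-- The recursively defined drawing of the Horton set:
`P 0 = {(0,0)}` and `P i = {(2x,y) : (x,y) ∈ P (i-1)} ∪ {(2x+1, y + g i) : (x,y) ∈ P (i-1)}`. -/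
def P : ℕ → Finset (ℤ × ℤ)
  | 0 => {(0, 0)}
  | i + 1 =>
      ((P i).image fun p => (2 * p.1, p.2)) ∪
        ((P i).image fun p => (2 * p.1 + 1, p.2 + g (i + 1)))

/-- Orientation determinant of the triple `(p, q, r)`. -/
def det3 (p q r : ℤ × ℤ) : ℤ :=
  (q.1 - p.1) * (r.2 - p.2) - (q.2 - p.2) * (r.1 - p.1)

lemma mem_P_succ {k : ℕ} {p : ℤ × ℤ} : p ∈ P (k+1) ↔
    (∃ u ∈ P k, p = (2*u.1, u.2)) ∨ (∃ u ∈ P k, p = (2*u.1+1, u.2 + g (k+1))) := by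
  simp [P, Finset.mem_union, Finset.mem_image, eq_comm]

lemma f_nonneg (k : ℕ) : 0 ≤ f k := by
  unfold f; split
  · exact le_refl 0
  · positivity

lemma one_le_two_pow' (n : ℕ) : (1:ℤ) ≤ 2 ^ n := by
  exact_mod_cast Nat.one_le_two_pow

lemma f_mono_succ (k : ℕ) : f k ≤ f (k+1) := by
  unfold f
  rcases le_or_gt k 1 with h | h
  · rw [if_pos h]
    split
    · exact le_refl 0
    · positivity
  · rw [if_neg (by omega), if_neg (by omega)]
    apply pow_le_pow_right₀ (by norm_num : (1:ℤ) ≤ 2)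
    rw [Nat.triangle_succ]
    omega

lemma g_nonneg (k : ℕ) : 0 ≤ g k := by
  unfold g; split
  · exact le_refl 0
  · rename_i h
    have h2 := f_mono_succ (k-1)
    rw [Nat.sub_add_cancel (by omega : 1 ≤ k)] at h2
    linarith

lemma f_step (m : ℕ) : f (m+1) = f m + g (m+1) := by
  unfold g
  split
  · rename_i h
    have : m = 0 := by omega
    subst this
    simp [f]
  · simp

lemma f_pos {k : ℕ} (hk : 2 ≤ k) : 1 ≤ f k := by
  rw [f, if_neg (by omega)]
  exact one_le_two_pow' _

lemma f_succ_eq (m : ℕ) (hm : 2 ≤ m) : f (m+1) = 2 ^ m * f m := by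
  rw [f, f, if_neg (by omega), if_neg (by omega), ← pow_add]
  congr 1
  rw [Nat.triangle_succ]
  have h1 : 1 ≤ m * (m-1) / 2 := by
    have : 2 * 1 ≤ m * (m - 1) := Nat.mul_le_mul hm (by omega)
    omega
  omega

lemma P_x_range : ∀ k : ℕ, ∀ p ∈ P k, 0 ≤ p.1 ∧ p.1 < 2 ^ k := by
  intro k
  induction k with
  | zero => intro p hp; simp [P] at hp; simp [hp]
  | succ k ih =>
    intro p hp
    rcases mem_P_succ.mp hp with ⟨u, hu, rfl⟩ | ⟨u, hu, rfl⟩ <;>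
      obtain ⟨h1, h2⟩ := ih u hu <;>
      dsimp only <;> rw [pow_succ] <;> omega

lemma P_y_range : ∀ k : ℕ, ∀ p ∈ P k, 0 ≤ p.2 ∧ p.2 ≤ f k := by
  intro k
  induction k with
  | zero => intro p hp; simp [P] at hp; simp [hp, f]
  | succ k ih =>
    intro p hp
    have hm := f_mono_succ k
    have hs := f_step k
    have hg := g_nonneg (k+1)
    rcases mem_P_succ.mp hp with ⟨u, hu, rfl⟩ | ⟨u, hu, rfl⟩ <;>
      obtain ⟨h1, h2⟩ := ih u hu <;> constructor <;> simp only [] <;> linarith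

lemma P_inj : ∀ k : ℕ, ∀ p ∈ P k, ∀ q ∈ P k, p.1 = q.1 → p = q := by
  intro k
  induction k with
  | zero => intro p hp q hq _; simp [P] at hp hq; rw [hp, hq]
  | succ k ih =>
    intro p hp q hq h
    rcases mem_P_succ.mp hp with ⟨u, hu, rfl⟩ | ⟨u, hu, rfl⟩ <;>
      rcases mem_P_succ.mp hq with ⟨v, hv, rfl⟩ | ⟨v, hv, rfl⟩ <;>
      simp only [] at h
    · have : u = v := ih u hu v hv (by omega)
      rw [this]
    · omega
    · omega
    · have : u = v := ih u hu v hv (by omega)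
      rw [this]

lemma P_sym : ∀ k : ℕ, ∀ p ∈ P k, ((2:ℤ)^k - 1 - p.1, f k - p.2) ∈ P k := by
  intro k
  induction k with
  | zero => intro p hp; simp [P] at hp ⊢; simp [hp, f]
  | succ k ih =>
    intro p hp
    have hs := f_step k
    rcases mem_P_succ.mp hp with ⟨u, hu, rfl⟩ | ⟨u, hu, rfl⟩
    · apply mem_P_succ.mpr
      right
      refine ⟨_, ih u hu, ?_⟩
      simp only [Prod.mk.injEq]
      rw [pow_succ]
      refine ⟨by ring, by linarith⟩
    · apply mem_P_succ.mpr
      left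
      refine ⟨_, ih u hu, ?_⟩
      simp only [Prod.mk.injEq]
      rw [pow_succ]
      refine ⟨by ring, by linarith⟩

lemma P_slope : ∀ k : ℕ, ∀ p ∈ P k, ∀ q ∈ P k, |q.2 - p.2| ≤ f k * |q.1 - p.1| := by
  intro k
  induction k with
  | zero =>
    intro p hp q hq; simp [P] at hp hq; simp [hp, hq]
  | succ k ih =>
    intro p hp q hq
    have hfm := f_mono_succ k
    have hf0 := f_nonneg k
    have hf1 := f_nonneg (k+1)
    have hs := f_step k
    have hg := g_nonneg (k+1)
    rcases mem_P_succ.mp hp with ⟨u, hu, rfl⟩ | ⟨u, hu, rfl⟩ <;>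
      rcases mem_P_succ.mp hq with ⟨v, hv, rfl⟩ | ⟨v, hv, rfl⟩ <;>
      obtain ⟨hu1, hu2⟩ := P_y_range k u hu <;>
      obtain ⟨hv1, hv2⟩ := P_y_range k v hv <;> simp only []
    · -- EE
      have habs : |2*v.1 - 2*u.1| = 2 * |v.1 - u.1| := by
        rw [show 2*v.1 - 2*u.1 = 2*(v.1 - u.1) by ring, abs_mul]
        norm_num
      rw [habs]
      have := ih u hu v hv
      nlinarith [abs_nonneg (v.1 - u.1), mul_nonneg (sub_nonneg.mpr hfm) (abs_nonneg (v.1 - u.1))]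
    · -- EO
      have h1 : |v.2 + g (k+1) - u.2| ≤ f (k+1) := abs_le.mpr ⟨by linarith, by linarith⟩
      have h2 : (1:ℤ) ≤ |2*v.1 + 1 - 2*u.1| := Int.one_le_abs (by omega)
      nlinarith [mul_le_mul_of_nonneg_left h2 hf1]
    · -- OE
      have h1 : |v.2 - (u.2 + g (k+1))| ≤ f (k+1) := abs_le.mpr ⟨by linarith, by linarith⟩
      have h2 : (1:ℤ) ≤ |2*v.1 - (2*u.1 + 1)| := Int.one_le_abs (by omega)
      nlinarith [mul_le_mul_of_nonneg_left h2 hf1]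
    · -- OO
      have hy : v.2 + g (k+1) - (u.2 + g (k+1)) = v.2 - u.2 := by ring
      have habs : |2*v.1 + 1 - (2*u.1 + 1)| = 2 * |v.1 - u.1| := by
        rw [show 2*v.1 + 1 - (2*u.1 + 1) = 2*(v.1 - u.1) by ring, abs_mul]
        norm_num
      rw [hy, habs]
      have := ih u hu v hv
      nlinarith [abs_nonneg (v.1 - u.1), mul_nonneg (sub_nonneg.mpr hfm) (abs_nonneg (v.1 - u.1))]

section cases

variable {M F a b ya yb rx ry : ℤ}

lemma caseEE (hM : 4 ≤ M) (hF : 1 ≤ F)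
    (ha : 0 ≤ a) (hb : b ≤ M - 1) (hab : a < b)
    (hya : 0 ≤ ya) (hya' : ya ≤ F) (hyb : 0 ≤ yb) (hyb' : yb ≤ F)
    (hrx : 0 ≤ rx) (hrx' : rx ≤ 2*M - 1) (hry : 0 ≤ ry) (hry' : ry ≤ M*F)
    (hs1 : yb - ya ≤ F*(b-a)) (hs2 : ya - yb ≤ F*(b-a)) :
    0 < 2*(2*b-2*a)*(ry + (2*M-1)*(M*F) - ya) - (yb-ya)*(2*rx+1-4*a) := by
  nlinarith [mul_nonneg hry (by linarith : (0:ℤ) ≤ b - a),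
    mul_nonneg (mul_nonneg (by linarith : (0:ℤ) ≤ M) (by linarith : (0:ℤ) ≤ F)) (by linarith : (0:ℤ) ≤ b - a - 1),
    mul_le_mul_of_nonneg_right hs1 (by linarith : (0:ℤ) ≤ 2*rx+1),
    mul_le_mul_of_nonneg_right hs2 (by linarith : (0:ℤ) ≤ 4*a),
    mul_le_mul_of_nonneg_left hrx' (by linarith : (0:ℤ) ≤ F*(b-a)),
    mul_nonneg (mul_nonneg (by linarith : (0:ℤ) ≤ F) (by linarith : (0:ℤ) ≤ b-a)) ha]

lemma caseOO (hM : 4 ≤ M) (hF : 1 ≤ F)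
    (ha : 0 ≤ a) (hb : b ≤ M - 1) (hab : a < b)
    (hya : 0 ≤ ya) (hya' : ya ≤ F) (hyb : 0 ≤ yb) (hyb' : yb ≤ F)
    (hrx : 0 ≤ rx) (hrx' : rx ≤ 2*M - 1) (hry : 0 ≤ ry) (hry' : ry ≤ M*F)
    (hs1 : yb - ya ≤ F*(b-a)) (hs2 : ya - yb ≤ F*(b-a)) :
    0 < 2*(2*b-2*a)*(ry + (2*M-1)*(M*F) - ya - (M-1)*F) - (yb-ya)*(2*rx+1-4*a-2) := by
  nlinarith [mul_nonneg hry (by linarith : (0:ℤ) ≤ b - a),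
    mul_nonneg (mul_nonneg (by linarith : (0:ℤ) ≤ M) (by linarith : (0:ℤ) ≤ F)) (by linarith : (0:ℤ) ≤ b - a - 1),
    mul_le_mul_of_nonneg_right hs1 (by linarith : (0:ℤ) ≤ 2*rx+1),
    mul_le_mul_of_nonneg_right hs2 (by linarith : (0:ℤ) ≤ 4*a+2),
    mul_le_mul_of_nonneg_left hrx' (by linarith : (0:ℤ) ≤ F*(b-a)),
    mul_nonneg (mul_nonneg (by linarith : (0:ℤ) ≤ F) (by linarith : (0:ℤ) ≤ b-a)) ha]

lemma caseEO (hM : 4 ≤ M) (hF : 1 ≤ F)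
    (ha : 0 ≤ a) (hb : b ≤ M - 1) (hab : a ≤ b)
    (hya : 0 ≤ ya) (hya' : ya ≤ F) (hyb : 0 ≤ yb) (hyb' : yb ≤ F)
    (hrx : 0 ≤ rx) (hrx' : rx ≤ 2*M - 1) (hry : 0 ≤ ry) (hry' : ry ≤ M*F)
    (hs1 : yb - ya ≤ F*(b-a)) (hs2 : ya - yb ≤ F*(b-a)) :
    0 < 2*(2*b+1-2*a)*(ry + (2*M-1)*(M*F) - ya) - (yb+(M-1)*F-ya)*(2*rx+1-4*a) := by
  rcases le_or_gt (2*rx+1-4*a) 0 with hw | hw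
  · nlinarith [mul_nonneg (by nlinarith : (0:ℤ) ≤ yb+(M-1)*F-ya) (by linarith : (0:ℤ) ≤ -(2*rx+1-4*a)),
      mul_nonneg (by linarith : (0:ℤ) ≤ 2*(b-a)) (by nlinarith : (0:ℤ) ≤ ry + (2*M-1)*(M*F) - ya),
      mul_pos (by linarith : (0:ℤ) < M) (by linarith : (0:ℤ) < F)]
  · nlinarith [mul_le_mul (by linarith : yb+(M-1)*F-ya ≤ F*(b-a)+(M-1)*F) (by linarith : 2*rx+1-4*a ≤ 4*M-1)
        (by linarith) (by nlinarith : (0:ℤ) ≤ F*(b-a)+(M-1)*F),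
      mul_nonneg hry (by linarith : (0:ℤ) ≤ 2*(b-a)+1),
      mul_nonneg (mul_nonneg (by linarith : (0:ℤ) ≤ M) (by linarith : (0:ℤ) ≤ F)) (by linarith : (0:ℤ) ≤ b - a),
      mul_pos (by linarith : (0:ℤ) < M) (by linarith : (0:ℤ) < F)]

lemma caseOE (hM : 4 ≤ M) (hF : 1 ≤ F)
    (ha : 0 ≤ a) (hb : b ≤ M - 1) (hab : a < b)
    (hya : 0 ≤ ya) (hya' : ya ≤ F) (hyb : 0 ≤ yb) (hyb' : yb ≤ F)
    (hrx : 0 ≤ rx) (hrx' : rx ≤ 2*M - 1) (hry : 0 ≤ ry) (hry' : ry ≤ M*F)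
    (hs1 : yb - ya ≤ F*(b-a)) (hs2 : ya - yb ≤ F*(b-a)) :
    0 < 2*(2*b-2*a-1)*(ry + (2*M-1)*(M*F) - ya - (M-1)*F) - (yb-ya-(M-1)*F)*(2*rx+1-4*a-2) := by
  have hq : yb - ya - (M-1)*F ≤ 0 := by nlinarith
  have hpos : (0:ℤ) < ry + (2*M-1)*(M*F) - ya - (M-1)*F := by nlinarith
  rcases le_or_gt 0 (2*rx+1-4*a-2) with hw | hw
  · nlinarith [mul_nonneg (by linarith : (0:ℤ) ≤ -(yb-ya-(M-1)*F)) hw,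
      mul_nonneg (by linarith : (0:ℤ) ≤ 2*(b-a)-1) (le_of_lt hpos)]
  · have h2 : (M-1)*F + ya - yb ≤ (M-1+(b-a))*F := by nlinarith
    have h3 : (0:ℤ) < 4*a+1-2*rx := by linarith
    have h4 : 4*a+1-2*rx ≤ 4*(M-1-(b-a))+1 := by linarith
    have key : ((M-1)*F + ya - yb)*(4*a+1-2*rx) ≤ ((M-1+(b-a))*F)*(4*(M-1-(b-a))+1) :=
      mul_le_mul h2 h4 (le_of_lt h3) (by nlinarith)
    nlinarith [key, mul_nonneg (by linarith : (0:ℤ) ≤ 2*(b-a)-1) hry,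
      mul_nonneg (mul_nonneg (by linarith : (0:ℤ) ≤ M) (by linarith : (0:ℤ) ≤ F)) (by linarith : (0:ℤ) ≤ b-a-1),
      mul_pos (by linarith : (0:ℤ) < M) (by linarith : (0:ℤ) < F),
      mul_nonneg (mul_nonneg (mul_nonneg (by linarith : (0:ℤ) ≤ M) (by linarith : (0:ℤ) ≤ F)) (by linarith : (0:ℤ) ≤ b-a-1)) (by linarith : (0:ℤ) ≤ M - 1 - (b-a))]

end cases

lemma keyA : ∀ k : ℕ, 2 ≤ k → ∀ p ∈ P k, ∀ q ∈ P k, ∀ r ∈ P k, p.1 < q.1 →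
    0 < 2*(q.1 - p.1)*(r.2 + g (k+1) - p.2) - (q.2 - p.2)*(2*r.1 + 1 - 2*p.1) := by
  intro k hk
  rcases Nat.lt_or_ge k 3 with h3 | h3
  · have : k = 2 := by omega
    subst this
    decide
  · obtain ⟨m, rfl⟩ : ∃ m, k = m + 1 := ⟨k - 1, by omega⟩
    have hm : 2 ≤ m := by omega
    set F := f m with hFdef
    set M := (2:ℤ)^m with hMdef
    have hF : 1 ≤ F := f_pos hm
    have hM : (4:ℤ) ≤ M := by
      have : (2:ℤ)^2 ≤ 2^m := pow_le_pow_right₀ (by norm_num) hm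
      norm_num at this
      linarith
    have hfk : f (m+1) = M * F := f_succ_eq m hm
    have hG : g (m+1) = (M-1) * F := by
      rw [g, if_neg (by omega)]
      simp only [Nat.add_sub_cancel]
      rw [hfk]; ring
    have hH : g (m+1+1) = (2*M-1)*(M*F) := by
      rw [g, if_neg (by omega)]
      simp only [Nat.add_sub_cancel]
      rw [f_succ_eq (m+1) (by omega), hfk, pow_succ]
      ring
    intro p hp q hq r hr hlt
    obtain ⟨hrx1, hrx2⟩ := P_x_range (m+1) r hr
    obtain ⟨hry1, hry2⟩ := P_y_range (m+1) r hr
    rw [pow_succ] at hrx2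
    rw [hfk] at hry2
    rcases mem_P_succ.mp hp with ⟨u, hu, rfl⟩ | ⟨u, hu, rfl⟩ <;>
      rcases mem_P_succ.mp hq with ⟨v, hv, rfl⟩ | ⟨v, hv, rfl⟩ <;>
      obtain ⟨hux1, hux2⟩ := P_x_range m u hu <;>
      obtain ⟨huy1, huy2⟩ := P_y_range m u hu <;>
      obtain ⟨hvx1, hvx2⟩ := P_x_range m v hv <;>
      obtain ⟨hvy1, hvy2⟩ := P_y_range m v hv <;>
      rw [← hMdef] at hux2 hvx2 <;>
      rw [← hFdef] at huy2 hvy2 <;>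
      simp only [] at hlt ⊢ <;>
      have hslope := P_slope m u hu v hv <;>
      rw [← hFdef] at hslope
    · -- EE
      have hab : u.1 < v.1 := by omega
      rw [abs_of_nonneg (by linarith : (0:ℤ) ≤ v.1 - u.1)] at hslope
      obtain ⟨hs1, hs2⟩ := abs_le.mp hslope
      rw [hH]
      linarith [caseEE hM hF hux1 (by omega : v.1 ≤ M - 1) hab huy1 huy2 hvy1 hvy2
        hrx1 (by omega : r.1 ≤ 2*M-1) hry1 hry2 (by linarith) (by linarith)]
    · -- EO
      have hab : u.1 ≤ v.1 := by omega
      rw [abs_of_nonneg (by linarith : (0:ℤ) ≤ v.1 - u.1)] at hslope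
      obtain ⟨hs1, hs2⟩ := abs_le.mp hslope
      rw [hH, hG]
      linarith [caseEO hM hF hux1 (by omega : v.1 ≤ M - 1) hab huy1 huy2 hvy1 hvy2
        hrx1 (by omega : r.1 ≤ 2*M-1) hry1 hry2 (by linarith) (by linarith)]
    · -- OE
      have hab : u.1 < v.1 := by omega
      rw [abs_of_nonneg (by linarith : (0:ℤ) ≤ v.1 - u.1)] at hslope
      obtain ⟨hs1, hs2⟩ := abs_le.mp hslope
      rw [hH, hG]
      linarith [caseOE hM hF hux1 (by omega : v.1 ≤ M - 1) hab huy1 huy2 hvy1 hvy2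
        hrx1 (by omega : r.1 ≤ 2*M-1) hry1 hry2 (by linarith) (by linarith)]
    · -- OO
      have hab : u.1 < v.1 := by omega
      rw [abs_of_nonneg (by linarith : (0:ℤ) ≤ v.1 - u.1)] at hslope
      obtain ⟨hs1, hs2⟩ := abs_le.mp hslope
      rw [hH, hG]
      linarith [caseOO hM hF hux1 (by omega : v.1 ≤ M - 1) hab huy1 huy2 hvy1 hvy2
        hrx1 (by omega : r.1 ≤ 2*M-1) hry1 hry2 (by linarith) (by linarith)]

lemma det3_cyc (p q r : ℤ × ℤ) : det3 p q r = det3 q r p := by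
  simp only [det3]; ring

lemma det3_swap23 (p q r : ℤ × ℤ) : det3 p q r = -det3 p r q := by
  simp only [det3]; ring

lemma det3_swap12 (p q r : ℤ × ℤ) : det3 p q r = -det3 q p r := by
  simp only [det3]; ring

lemma hortonEEO {k : ℕ} (hk : 2 ≤ k) {u v w : ℤ × ℤ} (hu : u ∈ P k) (hv : v ∈ P k)
    (hw : w ∈ P k) (huv : u ≠ v) :
    det3 (2*u.1, u.2) (2*v.1, v.2) (2*w.1+1, w.2 + g (k+1)) ≠ 0 := by
  rcases lt_trichotomy u.1 v.1 with h | h | h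
  · have hA := keyA k hk u hu v hv w hw h
    have he : det3 (2*u.1, u.2) (2*v.1, v.2) (2*w.1+1, w.2 + g (k+1)) =
        2*(v.1 - u.1)*(w.2 + g (k+1) - u.2) - (v.2 - u.2)*(2*w.1 + 1 - 2*u.1) := by
      simp only [det3]; ring
    rw [he]; exact ne_of_gt (by linarith)
  · exact absurd (P_inj k u hu v hv h) huv
  · have hA := keyA k hk v hv u hu w hw h
    have he : det3 (2*u.1, u.2) (2*v.1, v.2) (2*w.1+1, w.2 + g (k+1)) =
        -(2*(u.1 - v.1)*(w.2 + g (k+1) - v.2) - (u.2 - v.2)*(2*w.1 + 1 - 2*v.1)) := by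
      simp only [det3]; ring
    rw [he]; exact ne_of_lt (by linarith)

lemma hortonOOE {k : ℕ} (hk : 2 ≤ k) {u v w : ℤ × ℤ} (hu : u ∈ P k) (hv : v ∈ P k)
    (hw : w ∈ P k) (huv : u ≠ v) :
    det3 (2*u.1+1, u.2 + g (k+1)) (2*v.1+1, v.2 + g (k+1)) (2*w.1, w.2) ≠ 0 := by
  have key : ∀ x y : ℤ × ℤ, x ∈ P k → y ∈ P k → x.1 < y.1 →
      det3 (2*x.1+1, x.2 + g (k+1)) (2*y.1+1, y.2 + g (k+1)) (2*w.1, w.2) < 0 := by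
    intro x y hx hy hxy
    have hsx := P_sym k x hx
    have hsy := P_sym k y hy
    have hsw := P_sym k w hw
    have hA := keyA k hk _ hsy _ hsx _ hsw (by simp only []; linarith)
    simp only [] at hA
    have he : det3 (2*x.1+1, x.2 + g (k+1)) (2*y.1+1, y.2 + g (k+1)) (2*w.1, w.2) =
        -(2*((2^k - 1 - x.1) - (2^k - 1 - y.1))*((f k - w.2) + g (k+1) - (f k - y.2)) -
          ((f k - x.2) - (f k - y.2))*(2*(2^k - 1 - w.1) + 1 - 2*(2^k - 1 - y.1))) := by
      simp only [det3]; ring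
    rw [he]; linarith
  rcases lt_trichotomy u.1 v.1 with h | h | h
  · exact ne_of_lt (key u v hu hv h)
  · exact absurd (P_inj k u hu v hv h) huv
  · rw [det3_swap12]
    have := key v u hv hu h
    intro h0
    rw [neg_eq_zero] at h0
    linarith

/-- No three points of `P k` are collinear. -/
theorem P_general_position :
    ∀ k : ℕ, ∀ p ∈ P k, ∀ q ∈ P k, ∀ r ∈ P k,
      p ≠ q → p ≠ r → q ≠ r → det3 p q r ≠ 0 := by
  intro k
  induction k with
  | zero => decide
  | succ m ih =>
    rcases Nat.lt_or_ge m 2 with hm | hm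
    · interval_cases m
      · decide
      · decide
    · intro p hp q hq r hr hpq hpr hqr
      rcases mem_P_succ.mp hp with ⟨u, hu, rfl⟩ | ⟨u, hu, rfl⟩ <;>
        rcases mem_P_succ.mp hq with ⟨v, hv, rfl⟩ | ⟨v, hv, rfl⟩ <;>
        rcases mem_P_succ.mp hr with ⟨w, hw, rfl⟩ | ⟨w, hw, rfl⟩
      · -- EEE
        have huv : u ≠ v := fun h => hpq (by rw [h])
        have huw : u ≠ w := fun h => hpr (by rw [h])
        have hvw : v ≠ w := fun h => hqr (by rw [h])
        have hd := ih u hu v hv w hw huv huw hvw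
        have he : det3 (2*u.1, u.2) (2*v.1, v.2) (2*w.1, w.2) = 2 * det3 u v w := by
          simp only [det3]; ring
        rw [he]
        exact mul_ne_zero (by norm_num) hd
      · -- EEO
        have huv : u ≠ v := fun h => hpq (by rw [h])
        exact hortonEEO hm hu hv hw huv
      · -- EOE
        have huw : u ≠ w := fun h => hpr (by rw [h])
        rw [det3_swap23]
        simpa using hortonEEO hm hu hw hv huw
      · -- EOO
        have hvw : v ≠ w := fun h => hqr (by rw [h])
        rw [det3_cyc]
        exact hortonOOE hm hv hw hu hvw
      · -- OEE
        have hvw : v ≠ w := fun h => hqr (by rw [h])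
        rw [det3_cyc]
        exact hortonEEO hm hv hw hu hvw
      · -- OEO
        have huw : u ≠ w := fun h => hpr (by rw [h])
        rw [det3_swap23]
        simpa using hortonOOE hm hu hw hv huw
      · -- OOE
        have huv : u ≠ v := fun h => hpq (by rw [h])
        exact hortonOOE hm hu hv hw huv
      · -- OOO
        have huv : u ≠ v := fun h => hpq (by rw [h])
        have huw : u ≠ w := fun h => hpr (by rw [h])
        have hvw : v ≠ w := fun h => hqr (by rw [h])
        have hd := ih u hu v hv w hw huv huw hvw
        have he : det3 (2*u.1+1, u.2 + g (m+1)) (2*v.1+1, v.2 + g (m+1))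
            (2*w.1+1, w.2 + g (m+1)) = 2 * det3 u v w := by
          simp only [det3]; ring
        rw [he]
        exact mul_ne_zero (by norm_num) hd
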